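/- Let c > 0. Let b : ℝ → ℝ be locally bounded and measurable with b(x) = (1/(2c))·log x + (1/c)·log(log x) for all x ≥ 3, and define u(x) = ∫₀ˣ exp(−∫₀ʸ 2b(z) dz) dy. Then ∫_3^∞ exp(−∫₀ˣ 2b(y) dy) / (u(x) − u(x − c)) dx = ∞. -/

import Mathlib

open Real MeasureTheory intervalIntegral Set
open Filter

/-!
Write `A(x) = ∫₀ˣ 2b`. On `[3, ∞)` the drift is increasing, so on the window `[x - c, x]` the
integrand `e^{-A}` of `u` is at most `e^{-A(x)} e^{2b(x)(x - y)}`, giving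
`u(x) - u(x - c) ≤ e^{-A(x)} e^{2c b(x)} / (2b(x))`. The drift is tuned so that
`e^{2c b(x)} = x (log x)²`, hence the integrand of the criterion is at least
`2b(x) / (x (log x)²) ≥ 1 / (c x log x)`, whose integral diverges like `log log x / c`.
-/

theorem not_integrableOn_Ici_inv_mul_log (a : ℝ) :
    ¬ IntegrableOn (fun x => (x * log x)⁻¹) (Ici a) := by
  have hderiv : ∀ᶠ x in atTop, HasDerivAt (fun x => log (log x)) (x * log x)⁻¹ x := by
    filter_upwards [Ioi_mem_atTop 1] with x hx
    have hx0 : x ≠ 0 := by linarith [mem_Ioi.1 hx]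
    convert (hasDerivAt_log hx0).log (log_pos hx).ne' using 1
    field_simp
  have htendsto : Tendsto (fun x => ‖log (log x)‖) atTop atTop :=
    tendsto_norm_atTop_atTop.comp (tendsto_log_atTop.comp tendsto_log_atTop)
  exact not_integrableOn_of_tendsto_norm_atTop_of_deriv_isBigO_filter atTop (Ici_mem_atTop a)
    (hderiv.mono fun x hx => hx.differentiableAt) htendsto
    (EventuallyEq.isBigO (hderiv.mono fun x hx => hx.deriv))

theorem lintegral_ofReal_inv_mul_mul_log_eq_top {a c : ℝ} (ha : 1 ≤ a) (hc : 0 < c) :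
    ∫⁻ x in Ici a, ENNReal.ofReal (c * x * log x)⁻¹ = ⊤ := by
  have hnonneg : ∀ x ∈ Ici a, 0 ≤ (c * x * log x)⁻¹ := fun x hx => by
    have hx : 1 ≤ x := ha.trans hx
    have := log_nonneg hx
    positivity
  by_contra hfin
  refine not_integrableOn_Ici_inv_mul_log a ?_
  have hint : IntegrableOn (fun x => (c * x * log x)⁻¹) (Ici a) :=
    (lintegral_ofReal_ne_top_iff_integrable (by fun_prop)
      ((ae_restrict_iff' measurableSet_Ici).2 (ae_of_all _ hnonneg))).1 hfin
  refine IntegrableOn.congr_fun (hint.const_mul c) (fun x _ => ?_) measurableSet_Ici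
  field_simp

theorem intervalIntegrable_of_forall_isCompact_bounded {f : ℝ → ℝ} (hf : Measurable f)
    (hbdd : ∀ K : Set ℝ, IsCompact K → ∃ M, ∀ x ∈ K, |f x| ≤ M) (p q : ℝ) :
    IntervalIntegrable f volume p q := by
  obtain ⟨M, hM⟩ := hbdd (uIcc p q) isCompact_uIcc
  rw [intervalIntegrable_iff]
  refine Measure.integrableOn_of_bounded (M := M) measure_Ioc_lt_top.ne
    hf.aestronglyMeasurable ((ae_restrict_iff' measurableSet_uIoc).2 (ae_of_all _ ?_))
  exact fun x hx => hM x (uIoc_subset_uIcc hx)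

theorem integral_exp_sub_mul (x c K : ℝ) (hK : K ≠ 0) :
    ∫ y in (x - c)..x, exp ((x - y) * K) = (exp (c * K) - 1) / K := by
  rw [integral_comp_sub_left (fun t => exp (t * K)), integral_comp_mul_right _ hK, integral_exp]
  simp only [sub_self, sub_sub_cancel, zero_mul, exp_zero, smul_eq_mul]
  field_simp

theorem continuous_exp_neg_primitive {g : ℝ → ℝ}
    (hg : ∀ p q, IntervalIntegrable g volume p q) :
    Continuous fun y => exp (-∫ z in 0..y, g z) := by
  have := continuous_primitive hg 0
  fun_prop

theorem integral_exp_neg_primitive_le {g : ℝ → ℝ} (hg : ∀ p q, IntervalIntegrable g volume p q)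
    {x c K : ℝ} (hc : 0 ≤ c) (hK : 0 < K)
    (hgK : ∀ y ∈ Icc (x - c) x, g y ≤ K) :
    ∫ y in (x - c)..x, exp (-∫ z in 0..y, g z) ≤ exp (-∫ z in 0..x, g z) * (exp (c * K) / K) := by
  have hpointwise : ∀ y ∈ Icc (x - c) x,
      exp (-∫ z in 0..y, g z) ≤ exp (-∫ z in 0..x, g z) * exp ((x - y) * K) := by
    intro y hy
    have hincr : ∫ z in y..x, g z ≤ (x - y) * K := by
      simpa [mul_comm] using integral_mono_on hy.2 (hg y x) intervalIntegrable_const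
        fun z hz => hgK z ⟨hy.1.trans hz.1, hz.2⟩
    rw [← integral_interval_sub_left (hg 0 x) (hg 0 y)] at hincr
    rw [← exp_add, exp_le_exp]
    linarith
  calc ∫ y in (x - c)..x, exp (-∫ z in 0..y, g z)
      ≤ ∫ y in (x - c)..x, exp (-∫ z in 0..x, g z) * exp ((x - y) * K) :=
        integral_mono_on (by linarith) ((continuous_exp_neg_primitive hg).intervalIntegrable _ _)
          (by apply Continuous.intervalIntegrable; fun_prop) hpointwise
    _ = exp (-∫ z in 0..x, g z) * ((exp (c * K) - 1) / K) := by
        rw [intervalIntegral.integral_const_mul, integral_exp_sub_mul x c K hK.ne']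
    _ ≤ exp (-∫ z in 0..x, g z) * (exp (c * K) / K) := by gcongr; linarith

theorem div_exp_mul_le_exp_neg_primitive_div_integral {g : ℝ → ℝ}
    (hg : ∀ p q, IntervalIntegrable g volume p q) {x c K : ℝ} (hc : 0 < c)
    (hgK : ∀ y ∈ Icc (x - c) x, g y ≤ K) :
    K / exp (c * K) ≤
      exp (-∫ z in 0..x, g z) / ∫ y in (x - c)..x, exp (-∫ z in 0..y, g z) := by
  have hpos : 0 < ∫ y in (x - c)..x, exp (-∫ z in 0..y, g z) :=
    intervalIntegral_pos_of_pos ((continuous_exp_neg_primitive hg).intervalIntegrable _ _)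
      (fun _ => exp_pos _) (by linarith)
  rcases le_or_gt K 0 with hK | hK
  · exact (div_nonpos_of_nonpos_of_nonneg hK (exp_pos _).le).trans (by positivity)
  calc K / exp (c * K)
      = exp (-∫ z in 0..x, g z) / (exp (-∫ z in 0..x, g z) * (exp (c * K) / K)) := by
        field_simp
    _ ≤ _ := div_le_div_of_nonneg_left (exp_pos _).le hpos
        (integral_exp_neg_primitive_le hg hc.le hK hgK)

noncomputable def criticalDrift (c x : ℝ) : ℝ := 1 / (2 * c) * log x + 1 / c * log (log x)

theorem criticalDrift_monotoneOn {c : ℝ} (hc : 0 < c) : MonotoneOn (criticalDrift c) (Ioi 1) := by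
  intro z hz x _ hzx
  have hlog : log z ≤ log x := log_le_log (by linarith [mem_Ioi.1 hz]) hzx
  have hloglog : log (log z) ≤ log (log x) := log_le_log (log_pos hz) hlog
  unfold criticalDrift
  gcongr

theorem mul_two_mul_criticalDrift {c : ℝ} (hc : c ≠ 0) (x : ℝ) :
    c * (2 * criticalDrift c x) = log x + 2 * log (log x) := by
  unfold criticalDrift
  field_simp

theorem exp_mul_two_mul_criticalDrift {c x : ℝ} (hc : 0 < c) (hx : 1 < x) :
    exp (c * (2 * criticalDrift c x)) = x * log x ^ 2 := by
  rw [mul_two_mul_criticalDrift hc.ne', exp_add, exp_log (by linarith), ← log_rpow (log_pos hx), exp_log (by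
    have := log_pos hx; positivity)]
  norm_cast

theorem inv_mul_mul_log_le_two_mul_criticalDrift_div_exp {c x : ℝ} (hc : 0 < c)
    (hx : exp 1 ≤ x) :
    (c * x * log x)⁻¹ ≤ 2 * criticalDrift c x / exp (c * (2 * criticalDrift c x)) := by
  have hx1 : 1 < x := (one_lt_exp_iff.2 one_pos).trans_le hx
  have hlog : 1 ≤ log x := (le_log_iff_exp_le (by linarith)).2 hx
  have hdrift : log x / c ≤ 2 * criticalDrift c x := by
    rw [div_le_iff₀' hc, mul_two_mul_criticalDrift hc.ne']
    linarith [log_nonneg hlog]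
  rw [exp_mul_two_mul_criticalDrift hc hx1]
  calc (c * x * log x)⁻¹ = log x / c / (x * log x ^ 2) := by field_simp
    _ ≤ 2 * criticalDrift c x / (x * log x ^ 2) := by gcongr

/-- For `b(x) = (1/(2c))·log x + (1/c)·log log x`, the down-crossing criterion
integral `∫^∞ u'(x)/(u(x) − u(x−c)) dx` diverges. -/
theorem criterion_infinite_for_critical_drift
    (c : ℝ) (hc : 0 < c)
    (b : ℝ → ℝ) (hb_meas : Measurable b)
    (hb_loc : ∀ K : Set ℝ, IsCompact K → ∃ M, ∀ x ∈ K, |b x| ≤ M)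
    (hb : ∀ x : ℝ, 3 ≤ x →
      b x = (1 / (2 * c)) * Real.log x + (1 / c) * Real.log (Real.log x))
    (u : ℝ → ℝ)
    (hu : ∀ x, u x = ∫ y in (0:ℝ)..x, Real.exp (-∫ z in (0:ℝ)..y, 2 * b z)) :
    ∫⁻ x in Ici (3:ℝ),
      ENNReal.ofReal
        (Real.exp (-∫ y in (0:ℝ)..x, 2 * b y) / (u x - u (x - c))) = ⊤ := by
  have h2b : ∀ p q, IntervalIntegrable (fun z => 2 * b z) volume p q := fun p q =>
    (intervalIntegrable_of_forall_isCompact_bounded hb_meas hb_loc p q).const_mul 2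
  have hdiff : ∀ x, u x - u (x - c) = ∫ y in (x - c)..x, exp (-∫ z in 0..y, 2 * b z) := by
    intro x
    have hcont := continuous_exp_neg_primitive h2b
    rw [hu, hu]
    exact integral_interval_sub_left (hcont.intervalIntegrable _ _) (hcont.intervalIntegrable _ _)
  have hbound : ∀ x ∈ Ici (3 + c), ENNReal.ofReal (c * x * log x)⁻¹ ≤
      ENNReal.ofReal (exp (-∫ y in (0:ℝ)..x, 2 * b y) / (u x - u (x - c))) := by
    intro x hx
    have hx3 : 3 ≤ x - c := by linarith [mem_Ici.1 hx]
    have hdrift : ∀ y ∈ Icc (x - c) x, 2 * b y ≤ 2 * criticalDrift c x := fun y hy => by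
      rw [hb y (hx3.trans hy.1)]
      gcongr
      exact criticalDrift_monotoneOn hc (mem_Ioi.2 (by linarith [hy.1]))
        (mem_Ioi.2 (by linarith)) hy.2
    rw [hdiff]
    refine ENNReal.ofReal_le_ofReal ((inv_mul_mul_log_le_two_mul_criticalDrift_div_exp hc
      (by linarith [exp_one_lt_three])).trans ?_)
    exact div_exp_mul_le_exp_neg_primitive_div_integral h2b hc hdrift
  refine eq_top_iff.2 ?_
  calc ⊤ = ∫⁻ x in Ici (3 + c), ENNReal.ofReal (c * x * log x)⁻¹ :=
        (lintegral_ofReal_inv_mul_mul_log_eq_top (by linarith) hc).symm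
    _ ≤ ∫⁻ x in Ici (3 + c), ENNReal.ofReal
          (exp (-∫ y in (0:ℝ)..x, 2 * b y) / (u x - u (x - c))) :=
        setLIntegral_mono' measurableSet_Ici hbound
    _ ≤ _ := lintegral_mono_set (Ici_subset_Ici.2 (by linarith))
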